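/- arXiv:2408.11017 — 4 statements merged into one kernel-verified Lean document; each statement's English description precedes it below -/
import Mathlib

section
/- For the constructed elections: in E′, the dummy committee D satisfies λ-score^{E′}(D) = k·(ν+k)·t − 1, and D is a λ-score-maximizing size-k committee in E′ if and only if the graph G has no independent set of size k. -/
open Finset

variable {V : Type*}

/-- Ballot of an edge voter corresponding to an edge of the graph. -/
def edgeBallot [DecidableEq V] (k : ℕ) (e : Sym2 V) : Finset (V ⊕ Fin k) :=
  Sym2.lift ⟨fun u w => ({Sum.inl u, Sum.inl w} : Finset (V ⊕ Fin k)),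
    fun u w => Finset.pair_comm (Sum.inl u) (Sum.inl w)⟩ e

/-- The election E of the hardness construction, given as a multiset of approval ballots:
for each edge `{u,w}` there are `t` voters with ballot `{c_u, c_w}`; for each vertex `w`
there are `(ν − deg w)·t` voters with ballot `{c_w}`; for each pair `(d, c_w)` there are
`t` voters with ballot `{d, c_w}`; for each dummy `d` there are `k·t` voters with ballot `{d}`. -/
def electionE [Fintype V] [DecidableEq V] (G : SimpleGraph V) [DecidableRel G.Adj]
    (k t : ℕ) : Multiset (Finset (V ⊕ Fin k)) :=
  (G.edgeFinset.val.bind fun e => Multiset.replicate t (edgeBallot k e))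
  + ((Finset.univ : Finset V).val.bind fun w =>
      Multiset.replicate ((Fintype.card V - G.degree w) * t)
        ({Sum.inl w} : Finset (V ⊕ Fin k)))
  + ((Finset.univ : Finset (Fin k × V)).val.bind fun p =>
      Multiset.replicate t ({Sum.inr p.1, Sum.inl p.2} : Finset (V ⊕ Fin k)))
  + ((Finset.univ : Finset (Fin k)).val.bind fun d =>
      Multiset.replicate (k * t) ({Sum.inr d} : Finset (V ⊕ Fin k)))

/-- The election E′: one voter with ballot `{d*, c_{w*}}` has `d*` deleted from the ballot. -/
def electionE' [Fintype V] [DecidableEq V] (G : SimpleGraph V) [DecidableRel G.Adj]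
    (k t : ℕ) (dstar : Fin k) (wstar : V) : Multiset (Finset (V ⊕ Fin k)) :=
  ({Sum.inl wstar} : Finset (V ⊕ Fin k)) ::ₘ
    (electionE G k t).erase ({Sum.inr dstar, Sum.inl wstar} : Finset (V ⊕ Fin k))

/-- λ-score of a committee `W` in an election given as a multiset of ballots. -/
noncomputable def lamScoreM {α : Type*} [DecidableEq α] (lam : ℕ → ℝ)
    (E : Multiset (Finset α)) (W : Finset α) : ℝ :=
  (E.map fun b => ∑ j ∈ Finset.range ((W ∩ b).card), lam (j + 1)).sum


noncomputable def bf {α : Type*} [DecidableEq α] (lam : ℕ → ℝ) (W b : Finset α) : ℝ :=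
  ∑ j ∈ Finset.range ((W ∩ b).card), lam (j + 1)

lemma lamScoreM_add {α : Type*} [DecidableEq α] (lam : ℕ → ℝ) (E1 E2 : Multiset (Finset α))
    (W : Finset α) : lamScoreM lam (E1 + E2) W = lamScoreM lam E1 W + lamScoreM lam E2 W := by
  simp [lamScoreM]

lemma lamScoreM_bind {α β : Type*} [DecidableEq α] (lam : ℕ → ℝ) (s : Finset β)
    (n : β → ℕ) (B : β → Finset α) (W : Finset α) :
    lamScoreM lam (s.val.bind fun x => Multiset.replicate (n x) (B x)) W
      = ∑ x ∈ s, (n x : ℝ) * bf lam W (B x) := by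
  rw [lamScoreM, Multiset.map_bind, Multiset.sum_bind, Finset.sum_eq_multiset_sum]
  congr 1
  apply Multiset.map_congr rfl
  intro x _
  simp [Multiset.map_replicate, bf, mul_comm]

lemma bf_single {α : Type*} [DecidableEq α] {lam : ℕ → ℝ} (h1 : lam 1 = 1) (W : Finset α) (x : α) :
    bf lam W {x} = if x ∈ W then 1 else 0 := by
  by_cases h : x ∈ W
  · have h2 : W ∩ {x} = {x} := by
      ext y
      aesop
    simp [bf, h2, h, h1]
  · have h2 : W ∩ {x} = ∅ := by
      ext y
      aesop
    simp [bf, h2, h]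

lemma bf_pair {α : Type*} [DecidableEq α] {lam : ℕ → ℝ} (h1 : lam 1 = 1) (W : Finset α)
    {x y : α} (hxy : x ≠ y) :
    bf lam W {x, y} = (if x ∈ W then (1:ℝ) else 0) + (if y ∈ W then (1:ℝ) else 0)
      - (1 - lam 2) * ((if x ∈ W then (1:ℝ) else 0) * (if y ∈ W then (1:ℝ) else 0)) := by
  by_cases hx : x ∈ W <;> by_cases hy : y ∈ W
  · have h2 : W ∩ {x, y} = {x, y} := by
      ext z
      aesop
    rw [bf, h2, card_pair hxy]
    rw [Finset.sum_range_succ, Finset.sum_range_one, h1]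
    simp [hx, hy, sub_eq_iff_eq_add]
  · have h2 : W ∩ {x, y} = {x} := by
      ext z
      aesop
    simp [bf, h2, hx, hy, h1]
  · have h2 : W ∩ {x, y} = {y} := by
      ext z
      aesop
    simp [bf, h2, hx, hy, h1]
  · have h2 : W ∩ {x, y} = ∅ := by
      ext z
      aesop
    simp [bf, h2, hx, hy]

lemma ite_and_mul' (P Q : Prop) [Decidable P] [Decidable Q] :
    (if P ∧ Q then (1:ℝ) else 0) = (if P then (1:ℝ) else 0) * (if Q then (1:ℝ) else 0) := by
  split_ifs with h h1 h2 <;> simp_all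

lemma edge_sum [Fintype V] [DecidableEq V] (G : SimpleGraph V) [DecidableRel G.Adj]
    (k : ℕ) {lam : ℕ → ℝ} (h1 : lam 1 = 1) (W : Finset (V ⊕ Fin k)) :
    ∑ e ∈ G.edgeFinset, bf lam W (edgeBallot k e)
      = (∑ v : V, (G.degree v : ℝ) * (if Sum.inl v ∈ W then 1 else 0))
        - (1 - lam 2) * ((G.edgeFinset.filter fun e => ∀ v ∈ e, Sum.inl v ∈ W).card : ℝ) := by
  have key : ∀ e ∈ G.edgeFinset, bf lam W (edgeBallot k e)
      = (∑ v ∈ univ.filter (· ∈ e), (if Sum.inl v ∈ W then (1:ℝ) else 0))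
        - (1 - lam 2) * (if ∀ v ∈ e, Sum.inl v ∈ W then (1:ℝ) else 0) := by
    intro e he
    revert he
    induction e using Sym2.ind with
    | _ u w =>
      intro he
      have hadj : G.Adj u w := by simpa using he
      have hne : u ≠ w := hadj.ne
      have hb : edgeBallot k s(u, w) = ({Sum.inl u, Sum.inl w} : Finset (V ⊕ Fin k)) := rfl
      rw [hb, bf_pair h1 W (by simpa using hne)]
      have hfil : (univ.filter (· ∈ s(u, w)) : Finset V) = {u, w} := by
        ext z; simp [Sym2.mem_iff]
      have hiff : (∀ v ∈ (s(u, w) : Sym2 V), Sum.inl v ∈ W)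
          ↔ (Sum.inl u ∈ W ∧ Sum.inl w ∈ W) := by
        constructor
        · intro h; exact ⟨h u (by simp), h w (by simp)⟩
        · rintro ⟨ha, hb'⟩ v hv; rcases Sym2.mem_iff.mp hv with rfl | rfl <;> assumption
      rw [hfil, Finset.sum_pair hne, if_congr hiff rfl rfl, ite_and_mul']
  rw [Finset.sum_congr rfl key, Finset.sum_sub_distrib, ← Finset.mul_sum, Finset.sum_boole]
  congr 1
  have hsf : ∀ e ∈ G.edgeFinset,
      (∑ v ∈ univ.filter (· ∈ e), (if Sum.inl v ∈ W then (1:ℝ) else 0))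
      = ∑ v : V, (if v ∈ e then (if Sum.inl v ∈ W then (1:ℝ) else 0) else 0) := by
    intro e _; rw [Finset.sum_filter]
  rw [Finset.sum_congr rfl hsf, Finset.sum_comm]
  refine Finset.sum_congr rfl fun v _ => ?_
  rw [← Finset.sum_filter, Finset.sum_const, ← SimpleGraph.incidenceFinset_eq_filter,
    SimpleGraph.card_incidenceFinset_eq_degree, nsmul_eq_mul]

lemma scoreE [Fintype V] [DecidableEq V] (G : SimpleGraph V) [DecidableRel G.Adj]
    (k t : ℕ) {lam : ℕ → ℝ} (h1 : lam 1 = 1) (W : Finset (V ⊕ Fin k)) :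
    lamScoreM lam (electionE G k t) W
      = t * (((Fintype.card V : ℝ) + k) *
            (((univ.filter fun v : V => Sum.inl v ∈ W).card : ℝ)
              + ((univ.filter fun d : Fin k => Sum.inr d ∈ W).card : ℝ))
          - (1 - lam 2) * (((G.edgeFinset.filter fun e => ∀ v ∈ e, Sum.inl v ∈ W).card : ℝ)
              + ((univ.filter fun v : V => Sum.inl v ∈ W).card : ℝ)
                * ((univ.filter fun d : Fin k => Sum.inr d ∈ W).card : ℝ))) := by
  have hA : (∑ v : V, if Sum.inl v ∈ W then (1:ℝ) else 0)
      = ((univ.filter fun v : V => Sum.inl v ∈ W).card : ℝ) := Finset.sum_boole _ _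
  have hB : (∑ d : Fin k, if Sum.inr d ∈ W then (1:ℝ) else 0)
      = ((univ.filter fun d : Fin k => Sum.inr d ∈ W).card : ℝ) := Finset.sum_boole _ _
  have hS1 : ∑ e ∈ G.edgeFinset, (t:ℝ) * bf lam W (edgeBallot k e)
      = t * ((∑ v : V, (G.degree v : ℝ) * (if Sum.inl v ∈ W then 1 else 0))
          - (1 - lam 2) * ((G.edgeFinset.filter fun e => ∀ v ∈ e, Sum.inl v ∈ W).card : ℝ)) := by
    rw [← Finset.mul_sum, edge_sum G k h1 W]
  have hS2 : ∑ w : V, (((Fintype.card V - G.degree w) * t : ℕ) : ℝ) * bf lam W {Sum.inl w}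
      = t * ((Fintype.card V : ℝ) * (∑ v : V, if Sum.inl v ∈ W then (1:ℝ) else 0)
          - ∑ v : V, (G.degree v : ℝ) * (if Sum.inl v ∈ W then 1 else 0)) := by
    have hp : ∀ w : V, (((Fintype.card V - G.degree w) * t : ℕ) : ℝ) * bf lam W {Sum.inl w}
        = (t : ℝ) * (Fintype.card V : ℝ) * (if Sum.inl w ∈ W then (1:ℝ) else 0)
          - t * ((G.degree w : ℝ) * (if Sum.inl w ∈ W then (1:ℝ) else 0)) := by
      intro w
      rw [bf_single h1, Nat.cast_mul, Nat.cast_sub (G.degree_lt_card_verts w).le]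
      ring
    rw [Finset.sum_congr rfl fun w _ => hp w, Finset.sum_sub_distrib, ← Finset.mul_sum,
      ← Finset.mul_sum]
    ring
  have hS3 : ∑ p : Fin k × V, (t:ℝ) * bf lam W {Sum.inr p.1, Sum.inl p.2}
      = t * ((Fintype.card V : ℝ) * (∑ d : Fin k, if Sum.inr d ∈ W then (1:ℝ) else 0)
          + k * (∑ v : V, if Sum.inl v ∈ W then (1:ℝ) else 0)
          - (1 - lam 2) * ((∑ d : Fin k, if Sum.inr d ∈ W then (1:ℝ) else 0)
              * (∑ v : V, if Sum.inl v ∈ W then (1:ℝ) else 0))) := by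
    rw [← Finset.mul_sum]
    congr 1
    rw [Fintype.sum_prod_type]
    have step : ∀ d : Fin k, ∑ v : V, bf lam W {Sum.inr d, Sum.inl v}
        = (Fintype.card V : ℝ) * (if Sum.inr d ∈ W then (1:ℝ) else 0)
          + (∑ v : V, if Sum.inl v ∈ W then (1:ℝ) else 0)
          - (1 - lam 2) * ((if Sum.inr d ∈ W then (1:ℝ) else 0)
              * (∑ v : V, if Sum.inl v ∈ W then (1:ℝ) else 0)) := by
      intro d
      have hp : ∀ v : V, bf lam W {Sum.inr d, Sum.inl v}
          = ((if Sum.inr d ∈ W then (1:ℝ) else 0) + (if Sum.inl v ∈ W then (1:ℝ) else 0))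
            - (1 - lam 2) * ((if Sum.inr d ∈ W then (1:ℝ) else 0)
                * (if Sum.inl v ∈ W then (1:ℝ) else 0)) :=
        fun v => bf_pair h1 W (by simp)
      rw [Finset.sum_congr rfl fun v _ => hp v, Finset.sum_sub_distrib, Finset.sum_add_distrib,
        Finset.sum_const, ← Finset.mul_sum, ← Finset.mul_sum, card_univ, nsmul_eq_mul]
    rw [Finset.sum_congr rfl fun d _ => step d, Finset.sum_sub_distrib, Finset.sum_add_distrib,
      Finset.sum_const, ← Finset.mul_sum, ← Finset.mul_sum, ← Finset.sum_mul, card_univ,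
      Fintype.card_fin, nsmul_eq_mul]
  have hS4 : ∑ d : Fin k, ((k * t : ℕ) : ℝ) * bf lam W {Sum.inr d}
      = t * ((k : ℝ) * (∑ d : Fin k, if Sum.inr d ∈ W then (1:ℝ) else 0)) := by
    have hp : ∀ d : Fin k, ((k * t : ℕ) : ℝ) * bf lam W {Sum.inr d}
        = (t : ℝ) * (k:ℝ) * (if Sum.inr d ∈ W then (1:ℝ) else 0) := by
      intro d
      rw [bf_single h1]
      push_cast
      ring
    rw [Finset.sum_congr rfl fun d _ => hp d, ← Finset.mul_sum]
    ring
  rw [electionE, lamScoreM_add, lamScoreM_add, lamScoreM_add,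
    lamScoreM_bind lam G.edgeFinset (fun _ => t) (edgeBallot k) W,
    lamScoreM_bind lam univ (fun w => (Fintype.card V - G.degree w) * t)
      (fun w => ({Sum.inl w} : Finset (V ⊕ Fin k))) W,
    lamScoreM_bind lam univ (fun _ => t)
      (fun p : Fin k × V => ({Sum.inr p.1, Sum.inl p.2} : Finset (V ⊕ Fin k))) W,
    lamScoreM_bind lam univ (fun _ => k * t)
      (fun d : Fin k => ({Sum.inr d} : Finset (V ⊕ Fin k))) W,
    hS1, hS2, hS3, hS4, ← hA, ← hB]
  ring

lemma mem_electionE [Fintype V] [DecidableEq V] (G : SimpleGraph V) [DecidableRel G.Adj]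
    (k t : ℕ) (ht : 1 ≤ t) (dstar : Fin k) (wstar : V) :
    ({Sum.inr dstar, Sum.inl wstar} : Finset (V ⊕ Fin k)) ∈ electionE G k t := by
  have hm : ({Sum.inr dstar, Sum.inl wstar} : Finset (V ⊕ Fin k)) ∈
      ((Finset.univ : Finset (Fin k × V)).val.bind fun p =>
        Multiset.replicate t ({Sum.inr p.1, Sum.inl p.2} : Finset (V ⊕ Fin k))) := by
    rw [Multiset.mem_bind]
    exact ⟨(dstar, wstar), by simp, by rw [Multiset.mem_replicate]; exact ⟨by omega, rfl⟩⟩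
  rw [electionE]
  rw [Multiset.mem_add]
  left
  rw [Multiset.mem_add]
  right
  exact hm

lemma scoreE' [Fintype V] [DecidableEq V] (G : SimpleGraph V) [DecidableRel G.Adj]
    (k t : ℕ) (ht : 1 ≤ t) {lam : ℕ → ℝ} (dstar : Fin k) (wstar : V) (W : Finset (V ⊕ Fin k)) :
    lamScoreM lam (electionE' G k t dstar wstar) W
      = lamScoreM lam (electionE G k t) W
        - bf lam W {Sum.inr dstar, Sum.inl wstar} + bf lam W {Sum.inl wstar} := by
  have hmem := mem_electionE G k t ht dstar wstar
  have hc : ({Sum.inr dstar, Sum.inl wstar} : Finset (V ⊕ Fin k)) ::ₘ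
      (electionE G k t).erase ({Sum.inr dstar, Sum.inl wstar} : Finset (V ⊕ Fin k))
      = electionE G k t := Multiset.cons_erase hmem
  have h2 : lamScoreM lam (electionE G k t) W
      = bf lam W {Sum.inr dstar, Sum.inl wstar}
        + lamScoreM lam ((electionE G k t).erase
            ({Sum.inr dstar, Sum.inl wstar} : Finset (V ⊕ Fin k))) W := by
    conv_lhs => rw [← hc]
    rw [lamScoreM, Multiset.map_cons, Multiset.sum_cons]
    rfl
  rw [electionE', lamScoreM, Multiset.map_cons, Multiset.sum_cons]
  have h3 : (Multiset.map (fun b => ∑ j ∈ Finset.range ((W ∩ b).card), lam (j + 1))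
      ((electionE G k t).erase ({Sum.inr dstar, Sum.inl wstar} : Finset (V ⊕ Fin k)))).sum
      = lamScoreM lam ((electionE G k t).erase
          ({Sum.inr dstar, Sum.inl wstar} : Finset (V ⊕ Fin k))) W := rfl
  rw [h3]
  have h4 : (∑ j ∈ Finset.range ((W ∩ ({Sum.inl wstar} : Finset (V ⊕ Fin k))).card), lam (j + 1))
      = bf lam W {Sum.inl wstar} := rfl
  rw [h4]
  rw [h2]
  ring

/-- In E′ the dummy committee D has λ-score `k·(ν+k)·t − 1`, and D is a λ-score-maximizing
size-k committee in E′ iff G has no independent set of size k. -/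
theorem stmt0 [Fintype V] [DecidableEq V] (G : SimpleGraph V) [DecidableRel G.Adj]
    (k : ℕ) (hk : 1 ≤ k) (hV : 1 ≤ Fintype.card V)
    (lam : ℕ → ℝ) (hlam1 : lam 1 = 1)
    (hlam01 : ∀ i : ℕ, 1 ≤ i → lam i ∈ Set.Icc (0 : ℝ) 1)
    (hmono : ∀ i j : ℕ, 1 ≤ i → i ≤ j → lam j ≤ lam i)
    (hud : lam 2 < 1)
    (t : ℕ) (ht : t = ⌈(2 : ℝ) / (1 - lam 2)⌉₊)
    (dstar : Fin k) (wstar : V) :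
    lamScoreM lam (electionE' G k t dstar wstar)
        ((Finset.univ : Finset (Fin k)).image (Sum.inr : Fin k → V ⊕ Fin k))
      = (k : ℝ) * ((Fintype.card V : ℝ) + k) * t - 1 ∧
    ((∀ W : Finset (V ⊕ Fin k), W.card = k →
        lamScoreM lam (electionE' G k t dstar wstar) W ≤
          lamScoreM lam (electionE' G k t dstar wstar)
            ((Finset.univ : Finset (Fin k)).image (Sum.inr : Fin k → V ⊕ Fin k))) ↔
      ¬ ∃ I : Finset V, I.card = k ∧ ∀ u ∈ I, ∀ w ∈ I, ¬ G.Adj u w) := by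
  classical
  set D : Finset (V ⊕ Fin k) := (Finset.univ : Finset (Fin k)).image Sum.inr with hD
  have hβ : 0 < 1 - lam 2 := by linarith
  have hβ1 : 1 - lam 2 ≤ 1 := by
    have := (hlam01 2 (by norm_num)).1
    linarith
  have ht1 : 1 ≤ t := by
    rw [ht]
    have hpos : 0 < (2:ℝ) / (1 - lam 2) := by positivity
    exact Nat.one_le_iff_ne_zero.mpr (Nat.ceil_pos.mpr hpos).ne'
  have htβ : 2 ≤ (t:ℝ) * (1 - lam 2) := by
    have h := Nat.le_ceil ((2:ℝ) / (1 - lam 2))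
    rw [← ht] at h
    rw [div_le_iff₀ hβ] at h
    exact h
  have haD : (univ.filter fun v : V => Sum.inl v ∈ D) = ∅ := by
    ext v; simp [hD]
  have hbD : (univ.filter fun d : Fin k => Sum.inr d ∈ D) = univ := by
    ext d; simp [hD]
  have heD : (G.edgeFinset.filter fun e => ∀ v ∈ e, Sum.inl v ∈ D) = ∅ := by
    ext e
    simp only [mem_filter, notMem_empty, iff_false, not_and]
    intro _ h
    have h2 := h e.out.1 (Sym2.out_fst_mem e)
    simp [hD] at h2
  have hDd : Sum.inr dstar ∈ D := by simp [hD]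
  have hDw : Sum.inl wstar ∉ D := by simp [hD]
  have hscoreD : lamScoreM lam (electionE' G k t dstar wstar) D
      = (k:ℝ) * ((Fintype.card V : ℝ) + k) * t - 1 := by
    rw [scoreE' G k t ht1 dstar wstar D, scoreE G k t hlam1 D,
      bf_pair hlam1 D (by simp), bf_single hlam1 D, haD, hbD, heD]
    rw [if_pos hDd, if_neg hDw]
    simp only [card_empty, card_univ, Fintype.card_fin]
    push_cast
    ring
  refine ⟨hscoreD, ?_⟩
  constructor
  · intro hmax
    rintro ⟨I, hIcard, hIind⟩
    set W : Finset (V ⊕ Fin k) := I.image Sum.inl with hW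
    have hWcard : W.card = k := by
      rw [hW, card_image_of_injective _ Sum.inl_injective, hIcard]
    have haW : (univ.filter fun v : V => Sum.inl v ∈ W) = I := by
      ext v; simp [hW]
    have hbW : (univ.filter fun d : Fin k => Sum.inr d ∈ W) = ∅ := by
      ext d; simp [hW]
    have heW : (G.edgeFinset.filter fun e => ∀ v ∈ e, Sum.inl v ∈ W) = ∅ := by
      ext e
      simp only [mem_filter, notMem_empty, iff_false, not_and]
      intro he
      revert he
      induction e using Sym2.ind with
      | _ u w =>
        intro he h
        have hadj : G.Adj u w := by simpa using he
        have hu : u ∈ I := by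
          have := h u (by simp)
          simpa [hW] using this
        have hw : w ∈ I := by
          have := h w (by simp)
          simpa [hW] using this
        exact hIind u hu w hw hadj
    have hnr : Sum.inr dstar ∉ W := by simp [hW]
    have hscoreW : lamScoreM lam (electionE' G k t dstar wstar) W
        = (t:ℝ) * (((Fintype.card V : ℝ) + k) * k) := by
      rw [scoreE' G k t ht1 dstar wstar W, scoreE G k t hlam1 W,
        bf_pair hlam1 W (by simp), bf_single hlam1 W, haW, hbW, heW]
      rw [if_neg hnr]
      simp only [card_empty, hIcard]
      push_cast
      ring
    have hle := hmax W hWcard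
    rw [hscoreW, hscoreD] at hle
    have heq : (t:ℝ) * (((Fintype.card V : ℝ) + k) * k)
        = (k:ℝ) * ((Fintype.card V : ℝ) + k) * t := by ring
    linarith
  · intro hno W hWcard
    rw [hscoreD, scoreE' G k t ht1 dstar wstar W, scoreE G k t hlam1 W,
      bf_pair hlam1 W (by simp), bf_single hlam1 W]
    have habk : (univ.filter fun v : V => Sum.inl v ∈ W).card
        + (univ.filter fun d : Fin k => Sum.inr d ∈ W).card = k := by
      have h1 : W.filter (fun x => x.isLeft = true)
          = (univ.filter fun v : V => Sum.inl v ∈ W).image Sum.inl := by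
        ext x; cases x <;> simp
      have h2 : W.filter (fun x => ¬ x.isLeft = true)
          = (univ.filter fun d : Fin k => Sum.inr d ∈ W).image Sum.inr := by
        ext x; cases x <;> simp
      have h3 := Finset.card_filter_add_card_filter_not
        (s := W) (p := fun x : V ⊕ Fin k => x.isLeft = true)
      rw [h1, h2, card_image_of_injective _ Sum.inl_injective,
        card_image_of_injective _ Sum.inr_injective, hWcard] at h3
      exact h3
    set aW := (univ.filter fun v : V => Sum.inl v ∈ W).card with haW
    set bW := (univ.filter fun d : Fin k => Sum.inr d ∈ W).card with hbW
    set e2 := (G.edgeFinset.filter fun e => ∀ v ∈ e, Sum.inl v ∈ W).card with he2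
    have hprod : (t:ℝ) * (((Fintype.card V : ℝ) + k) * ((aW : ℝ) + (bW : ℝ)))
        = (k:ℝ) * ((Fintype.card V : ℝ) + k) * t := by
      have : ((aW : ℝ) + (bW : ℝ)) = (k : ℝ) := by exact_mod_cast habk
      rw [this]; ring
    by_cases haz : aW = 0
    · have hfe : (univ.filter fun v : V => Sum.inl v ∈ W) = ∅ :=
        card_eq_zero.mp (haW ▸ haz)
      have hnol : ∀ v : V, Sum.inl v ∉ W := by
        intro v hv
        have : v ∈ (univ.filter fun v : V => Sum.inl v ∈ W) := by simp [hv]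
        rw [hfe] at this
        exact absurd this (notMem_empty v)
      have hbWk : bW = k := by omega
      have hfu : (univ.filter fun d : Fin k => Sum.inr d ∈ W) = univ := by
        apply Finset.eq_univ_of_card
        rw [← hbW, hbWk, Fintype.card_fin]
      have hp : Sum.inr dstar ∈ W := by
        have : dstar ∈ (univ.filter fun d : Fin k => Sum.inr d ∈ W) := by
          rw [hfu]; exact mem_univ dstar
        exact (mem_filter.mp this).2
      have he2z : e2 = 0 := by
        rw [he2, card_eq_zero]
        ext e
        simp only [mem_filter, notMem_empty, iff_false, not_and]
        intro _ h
        exact absurd (h e.out.1 (Sym2.out_fst_mem e)) (hnol e.out.1)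
      rw [if_pos hp, if_neg (hnol wstar), haz, he2z, hbWk]
      push_cast
      linarith
    · have h1a : 1 ≤ aW := Nat.one_le_iff_ne_zero.mpr haz
      have hS1 : 1 ≤ e2 + aW * bW := by
        by_cases hbz : bW = 0
        · rcases Nat.eq_zero_or_pos e2 with he2z | he2p
          · exfalso
            apply hno
            refine ⟨univ.filter fun v : V => Sum.inl v ∈ W, by omega, ?_⟩
            intro u hu w hw hadj
            have huW : Sum.inl u ∈ W := (mem_filter.mp hu).2
            have hwW : Sum.inl w ∈ W := (mem_filter.mp hw).2
            have hmem : s(u, w) ∈ G.edgeFinset.filter fun e => ∀ v ∈ e, Sum.inl v ∈ W := by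
              rw [mem_filter]
              refine ⟨by simpa using hadj, ?_⟩
              intro v hv
              rcases Sym2.mem_iff.mp hv with rfl | rfl <;> assumption
            have : 0 < e2 := by
              rw [he2]
              exact card_pos.mpr ⟨_, hmem⟩
            omega
          · omega
        · have : 1 ≤ bW := Nat.one_le_iff_ne_zero.mpr hbz
          have : 1 ≤ aW * bW := Nat.one_le_iff_ne_zero.mpr (by positivity)
          omega
      have hS1r : (1:ℝ) ≤ (e2 : ℝ) + (aW : ℝ) * (bW : ℝ) := by exact_mod_cast hS1
      have hmul : (2:ℝ) ≤ ((t:ℝ) * (1 - lam 2)) * ((e2 : ℝ) + (aW : ℝ) * (bW : ℝ)) := by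
        nlinarith
      by_cases hp : Sum.inr dstar ∈ W <;> by_cases hq : Sum.inl wstar ∈ W
      · rw [if_pos hp, if_pos hq]
        linarith [hprod, hmul, hβ1, hβ]
      · rw [if_pos hp, if_neg hq]
        linarith [hprod, hmul, hβ1, hβ]
      · rw [if_neg hp, if_pos hq]
        linarith [hprod, hmul, hβ1, hβ]
      · rw [if_neg hp, if_neg hq]
        linarith [hprod, hmul, hβ1, hβ]
end

section
/- For the constructed election E: the dummy committee D satisfies λ-score^{E}(D) = k·(ν+k)·t, and every committee W ⊆ C with |W| = k satisfies λ-score^{E}(W) ≤ k·(ν+k)·t; in particular D is a λ-score-maximizing size-k committee in E. -/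
open Finset

variable {V : Type*}

lemma bind_rep_map_sum {ι α : Type*} (s : Finset ι) (n : ι → ℕ) (b : ι → α) (g : α → ℝ) :
    ((s.val.bind fun i => Multiset.replicate (n i) (b i)).map g).sum
      = ∑ i ∈ s, (n i : ℝ) * g (b i) := by
  rw [Multiset.map_bind, Multiset.sum_bind]
  simp only [Multiset.map_replicate, Multiset.sum_replicate, nsmul_eq_mul]
  rfl

lemma electionE_map_sum [Fintype V] [DecidableEq V] (G : SimpleGraph V) [DecidableRel G.Adj]
    (k t : ℕ) (g : Finset (V ⊕ Fin k) → ℝ) :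
    ((electionE G k t).map g).sum =
      (∑ e ∈ G.edgeFinset, (t : ℝ) * g (edgeBallot k e))
      + (∑ w : V, (((Fintype.card V - G.degree w) * t : ℕ) : ℝ) * g {Sum.inl w})
      + (∑ p : Fin k × V, (t : ℝ) * g {Sum.inr p.1, Sum.inl p.2})
      + (∑ d : Fin k, ((k * t : ℕ) : ℝ) * g {Sum.inr d}) := by
  simp only [electionE, Multiset.map_add, Multiset.sum_add, bind_rep_map_sum]

lemma inl_mem_edgeBallot [DecidableEq V] {k : ℕ} {w : V} {e : Sym2 V} :
    Sum.inl w ∈ edgeBallot k e ↔ w ∈ e := by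
  induction e using Sym2.inductionOn with
  | hf u v => simp [edgeBallot]

lemma inr_not_mem_edgeBallot [DecidableEq V] {k : ℕ} {d : Fin k} {e : Sym2 V} :
    Sum.inr d ∉ edgeBallot k e := by
  induction e using Sym2.inductionOn with
  | hf u v => simp [edgeBallot]

lemma appCount_eq [Fintype V] [DecidableEq V] (G : SimpleGraph V) [DecidableRel G.Adj]
    (k t : ℕ) (c : V ⊕ Fin k) :
    ((electionE G k t).map fun b => if c ∈ b then (1 : ℝ) else 0).sum
      = ((Fintype.card V : ℝ) + k) * t := by
  rw [electionE_map_sum]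
  cases c with
  | inl w =>
    have h1 : (∑ e ∈ G.edgeFinset,
        (t : ℝ) * (if Sum.inl w ∈ edgeBallot k e then (1:ℝ) else 0)) = (G.degree w : ℝ) * t := by
      simp only [inl_mem_edgeBallot, mul_ite, mul_one, mul_zero]
      rw [← Finset.sum_filter, Finset.sum_const, ← SimpleGraph.incidenceFinset_eq_filter,
        SimpleGraph.card_incidenceFinset_eq_degree, nsmul_eq_mul, mul_comm]
    have h2 : (∑ w' : V, (((Fintype.card V - G.degree w') * t : ℕ) : ℝ) *
          (if Sum.inl w ∈ ({Sum.inl w'} : Finset (V ⊕ Fin k)) then (1:ℝ) else 0))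
        = (((Fintype.card V - G.degree w) * t : ℕ) : ℝ) := by
      simp only [Finset.mem_singleton, Sum.inl.injEq, mul_ite, mul_one, mul_zero]
      rw [Finset.sum_ite_eq]
      simp
    have h3 : (∑ p : Fin k × V, (t : ℝ) *
          (if Sum.inl w ∈ ({Sum.inr p.1, Sum.inl p.2} : Finset (V ⊕ Fin k)) then (1:ℝ) else 0))
        = (k : ℝ) * t := by
      simp only [Finset.mem_insert, Finset.mem_singleton, Sum.inl.injEq, mul_ite, mul_one,
        mul_zero]
      rw [Fintype.sum_prod_type]
      simp [Finset.sum_ite_eq]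
    have h4 : (∑ d : Fin k, ((k * t : ℕ) : ℝ) *
          (if Sum.inl w ∈ ({Sum.inr d} : Finset (V ⊕ Fin k)) then (1:ℝ) else 0)) = 0 := by
      simp
    rw [h1, h2, h3, h4]
    have hd : G.degree w ≤ Fintype.card V := (G.degree_lt_card_verts w).le
    push_cast [Nat.cast_sub hd]
    ring
  | inr d =>
    have h1 : (∑ e ∈ G.edgeFinset,
        (t : ℝ) * (if Sum.inr d ∈ edgeBallot k e then (1:ℝ) else 0)) = 0 := by
      simp [inr_not_mem_edgeBallot]
    have h2 : (∑ w' : V, (((Fintype.card V - G.degree w') * t : ℕ) : ℝ) *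
          (if Sum.inr d ∈ ({Sum.inl w'} : Finset (V ⊕ Fin k)) then (1:ℝ) else 0)) = 0 := by
      simp
    have h3 : (∑ p : Fin k × V, (t : ℝ) *
          (if Sum.inr d ∈ ({Sum.inr p.1, Sum.inl p.2} : Finset (V ⊕ Fin k)) then (1:ℝ) else 0))
        = (Fintype.card V : ℝ) * t := by
      simp only [Finset.mem_insert, Finset.mem_singleton, Sum.inr.injEq, mul_ite, mul_one,
        mul_zero]
      rw [Fintype.sum_prod_type]
      simp [Finset.sum_ite_eq, mul_comm]
    have h4 : (∑ d' : Fin k, ((k * t : ℕ) : ℝ) *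
          (if Sum.inr d ∈ ({Sum.inr d'} : Finset (V ⊕ Fin k)) then (1:ℝ) else 0))
        = ((k : ℝ)) * t := by
      simp only [Finset.mem_singleton, Sum.inr.injEq, mul_ite, mul_one, mul_zero]
      rw [Finset.sum_ite_eq]
      simp [mul_comm]
    rw [h1, h2, h3, h4]
    ring

lemma map_sum_comm {α β : Type*} [DecidableEq β] (E : Multiset α) (W : Finset β)
    (g : β → α → ℝ) :
    (E.map fun b => ∑ c ∈ W, g c b).sum = ∑ c ∈ W, (E.map fun b => g c b).sum := by
  induction E using Multiset.induction_on with
  | empty => simp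
  | cons a s ih => simp [Multiset.map_cons, Multiset.sum_cons, ih, Finset.sum_add_distrib]

lemma natScore_eq [Fintype V] [DecidableEq V] (G : SimpleGraph V) [DecidableRel G.Adj]
    (k t : ℕ) (W : Finset (V ⊕ Fin k)) :
    ((electionE G k t).map fun b => (((W ∩ b).card : ℕ) : ℝ)).sum
      = (W.card : ℝ) * (((Fintype.card V : ℝ) + k) * t) := by
  have hcard : ∀ b : Finset (V ⊕ Fin k),
      (((W ∩ b).card : ℕ) : ℝ) = ∑ c ∈ W, if c ∈ b then (1:ℝ) else 0 := by
    intro b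
    rw [Finset.sum_boole, Finset.filter_mem_eq_inter]
  simp only [hcard]
  rw [map_sum_comm]
  simp only [appCount_eq]
  rw [Finset.sum_const, nsmul_eq_mul]

/-- In E the dummy committee D has λ-score `k·(ν+k)·t`, every size-k committee has
λ-score at most `k·(ν+k)·t`, and in particular D is a λ-score-maximizing size-k
committee in E. -/
theorem stmt2 [Fintype V] [DecidableEq V] (G : SimpleGraph V) [DecidableRel G.Adj]
    (k : ℕ) (hk : 1 ≤ k) (hV : 1 ≤ Fintype.card V)
    (lam : ℕ → ℝ) (hlam1 : lam 1 = 1)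
    (hlam01 : ∀ i : ℕ, 1 ≤ i → lam i ∈ Set.Icc (0 : ℝ) 1)
    (hmono : ∀ i j : ℕ, 1 ≤ i → i ≤ j → lam j ≤ lam i)
    (hud : lam 2 < 1)
    (t : ℕ) (ht : t = ⌈(2 : ℝ) / (1 - lam 2)⌉₊) :
    lamScoreM lam (electionE G k t)
        ((Finset.univ : Finset (Fin k)).image (Sum.inr : Fin k → V ⊕ Fin k))
      = (k : ℝ) * ((Fintype.card V : ℝ) + k) * t ∧
    (∀ W : Finset (V ⊕ Fin k), W.card = k →
        lamScoreM lam (electionE G k t) W ≤ (k : ℝ) * ((Fintype.card V : ℝ) + k) * t) ∧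
    (∀ W : Finset (V ⊕ Fin k), W.card = k →
        lamScoreM lam (electionE G k t) W ≤
          lamScoreM lam (electionE G k t)
            ((Finset.univ : Finset (Fin k)).image (Sum.inr : Fin k → V ⊕ Fin k))) := by
  set D : Finset (V ⊕ Fin k) :=
    (Finset.univ : Finset (Fin k)).image (Sum.inr : Fin k → V ⊕ Fin k) with hD
  have hDmem : ∀ c : V ⊕ Fin k, c ∈ D ↔ ∃ d : Fin k, Sum.inr d = c := by
    intro c; simp [hD]
  -- score of D
  have hscoreD : lamScoreM lam (electionE G k t) D
      = (k : ℝ) * ((Fintype.card V : ℝ) + k) * t := by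
    rw [lamScoreM, electionE_map_sum]
    have c1 : ∀ e : Sym2 V, (D ∩ edgeBallot k e).card = 0 := by
      intro e
      rw [Finset.card_eq_zero]
      ext c
      simp only [Finset.mem_inter, Finset.notMem_empty, iff_false, not_and, hDmem]
      rintro ⟨d, rfl⟩
      exact inr_not_mem_edgeBallot
    have c2 : ∀ w : V, (D ∩ ({Sum.inl w} : Finset (V ⊕ Fin k))).card = 0 := by
      intro w
      rw [Finset.card_eq_zero]
      ext c
      simp only [Finset.mem_inter, Finset.mem_singleton, Finset.notMem_empty, iff_false,
        not_and, hDmem]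
      rintro ⟨d, rfl⟩
      simp
    have c3 : ∀ (d : Fin k) (w : V),
        (D ∩ ({Sum.inr d, Sum.inl w} : Finset (V ⊕ Fin k))) = {Sum.inr d} := by
      intro d w
      ext c
      simp only [Finset.mem_inter, Finset.mem_insert, Finset.mem_singleton, hDmem]
      constructor
      · rintro ⟨⟨d', rfl⟩, h | h⟩
        · exact h
        · exact absurd h (by simp)
      · rintro rfl
        exact ⟨⟨d, rfl⟩, Or.inl rfl⟩
    have c4 : ∀ d : Fin k, (D ∩ ({Sum.inr d} : Finset (V ⊕ Fin k))) = {Sum.inr d} := by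
      intro d
      ext c
      simp only [Finset.mem_inter, Finset.mem_singleton, hDmem]
      constructor
      · rintro ⟨_, h⟩; exact h
      · rintro rfl; exact ⟨⟨d, rfl⟩, rfl⟩
    simp only [c1, c2, Finset.range_zero, Finset.sum_empty, mul_zero, Finset.sum_const_zero,
      zero_add, add_zero]
    simp only [c3, c4, Finset.card_singleton, Finset.range_one, Finset.sum_singleton, hlam1,
      mul_one]
    rw [Finset.sum_const, Finset.sum_const]
    simp only [Finset.card_univ, Fintype.card_prod, Fintype.card_fin, nsmul_eq_mul]
    push_cast
    ring
  refine ⟨hscoreD, ?_, ?_⟩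
  · intro W hW
    have hle : lamScoreM lam (electionE G k t) W
        ≤ ((electionE G k t).map fun b => (((W ∩ b).card : ℕ) : ℝ)).sum := by
      rw [lamScoreM]
      apply Multiset.sum_map_le_sum_map
      intro b _
      calc ∑ j ∈ Finset.range ((W ∩ b).card), lam (j + 1)
          ≤ ∑ _j ∈ Finset.range ((W ∩ b).card), (1 : ℝ) := by
            apply Finset.sum_le_sum
            intro j _
            exact (hlam01 (j + 1) (Nat.le_add_left 1 j)).2
        _ = (((W ∩ b).card : ℕ) : ℝ) := by simp
    calc lamScoreM lam (electionE G k t) W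
        ≤ ((electionE G k t).map fun b => (((W ∩ b).card : ℕ) : ℝ)).sum := hle
      _ = (W.card : ℝ) * (((Fintype.card V : ℝ) + k) * t) := natScore_eq G k t W
      _ = (k : ℝ) * ((Fintype.card V : ℝ) + k) * t := by rw [hW]; ring
  · intro W hW
    rw [hscoreD]
    -- reuse the bound
    have hle : lamScoreM lam (electionE G k t) W
        ≤ ((electionE G k t).map fun b => (((W ∩ b).card : ℕ) : ℝ)).sum := by
      rw [lamScoreM]
      apply Multiset.sum_map_le_sum_map
      intro b _
      calc ∑ j ∈ Finset.range ((W ∩ b).card), lam (j + 1)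
          ≤ ∑ _j ∈ Finset.range ((W ∩ b).card), (1 : ℝ) := by
            apply Finset.sum_le_sum
            intro j _
            exact (hlam01 (j + 1) (Nat.le_add_left 1 j)).2
        _ = (((W ∩ b).card : ℕ) : ℝ) := by simp
    calc lamScoreM lam (electionE G k t) W
        ≤ ((electionE G k t).map fun b => (((W ∩ b).card : ℕ) : ℝ)).sum := hle
      _ = (W.card : ℝ) * (((Fintype.card V : ℝ) + k) * t) := natScore_eq G k t W
      _ = (k : ℝ) * ((Fintype.card V : ℝ) + k) * t := by rw [hW]; ring
end

section
/- Let (C, (v_i)_{i∈N}) be an approval election, let k ∈ ℕ, and let σ ∈ ℕ satisfy |{c ∈ C : s(c) > σ}| < k ≤ |{c ∈ C : s(c) ≥ σ}|. Write C_above = {c ∈ C : s(c) > σ} and C_equal = {c ∈ C : s(c) = σ}. Then for every S ⊆ C with |S| = k, the maximum of |W ∩ S| over all size-k committees W that maximize the AV-score ∑_{c∈W} s(c) equals |C_above ∩ S| + min(k − |C_above|, |C_equal ∩ S|). -/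
open Finset

variable {α ι : Type*}

/-- Approval score of a candidate: the number of voters approving it. -/
def appScore [DecidableEq α] (N : Finset ι) (v : ι → Finset α) (c : α) : ℕ :=
  (N.filter fun i => c ∈ v i).card

/-- AV-score of a committee. -/
def avScore [DecidableEq α] (N : Finset ι) (v : ι → Finset α) (W : Finset α) : ℕ :=
  ∑ c ∈ W, appScore N v c

/-- For every size-k committee S, the maximum overlap `|W ∩ S|` over all AV-score
maximizing size-k committees W equals `|C_above ∩ S| + min (k − |C_above|) |C_equal ∩ S|`. -/
theorem stmt5 [DecidableEq α] (C : Finset α) (N : Finset ι) (v : ι → Finset α)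
    (hv : ∀ i ∈ N, v i ⊆ C) (k σ : ℕ)
    (h1 : (C.filter fun c => σ < appScore N v c).card < k)
    (h2 : k ≤ (C.filter fun c => σ ≤ appScore N v c).card)
    (S : Finset α) (hSsub : S ⊆ C) (hScard : S.card = k) :
    IsGreatest
      {n : ℕ | ∃ W : Finset α, W ⊆ C ∧ W.card = k ∧
        (∀ W' : Finset α, W' ⊆ C → W'.card = k → avScore N v W' ≤ avScore N v W) ∧
        (W ∩ S).card = n}
      (((C.filter fun c => σ < appScore N v c) ∩ S).card +
        min (k - (C.filter fun c => σ < appScore N v c).card)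
          (((C.filter fun c => appScore N v c = σ) ∩ S).card)) := by
  classical
  set s := appScore N v with hsdef
  set A := C.filter (fun c => σ < s c) with hAdef
  set E := C.filter (fun c => s c = σ) with hEdef
  set a := A.card with hadef
  have havs : ∀ W : Finset α, avScore N v W = ∑ c ∈ W, s c := fun W => rfl
  have hAC : A ⊆ C := filter_subset _ _
  have hEC : E ⊆ C := filter_subset _ _
  have hdisj : Disjoint A E := by
    rw [Finset.disjoint_left]
    intro c hcA hcE
    rw [hAdef, Finset.mem_filter] at hcA
    rw [hEdef, Finset.mem_filter] at hcE
    omega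
  have hAE : A ∪ E = C.filter (fun c => σ ≤ s c) := by
    ext c
    simp only [Finset.mem_union, hAdef, hEdef, Finset.mem_filter]
    constructor
    · rintro (⟨h, h'⟩ | ⟨h, h'⟩) <;> exact ⟨h, by omega⟩
    · rintro ⟨h, h'⟩
      rcases eq_or_lt_of_le h' with heq | hlt
      · exact Or.inr ⟨h, heq.symm⟩
      · exact Or.inl ⟨h, hlt⟩
  have hEk : k - a ≤ E.card := by
    have := Finset.card_union_of_disjoint hdisj
    rw [hAE] at this
    omega
  have hak : a < k := h1
  -- the maximal AV-score
  set M := (∑ c ∈ A, s c) + (k - a) * σ with hM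
  -- splitting a sum over W into W ∩ A and W \ A
  have hsplit : ∀ W : Finset α, ∑ c ∈ W, s c = ∑ c ∈ W ∩ A, s c + ∑ c ∈ W \ A, s c := by
    intro W
    have hW : W ∩ A ∪ W \ A = W := by
      ext c; simp only [Finset.mem_union, Finset.mem_inter, Finset.mem_sdiff]; tauto
    have hd : Disjoint (W ∩ A) (W \ A) := by
      rw [Finset.disjoint_left]; intro c hc hc'
      simp only [Finset.mem_inter, Finset.mem_sdiff] at hc hc'; tauto
    rw [← Finset.sum_union hd, hW]
  -- key inequality: any size-k committee's score plus the number of missed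
  -- elements of A is at most M
  have key : ∀ W : Finset α, W ⊆ C → W.card = k →
      ∑ c ∈ W, s c + (A \ W).card ≤ M := by
    intro W hWC hWk
    have hx : (W ∩ A).card ≤ k := by
      calc (W ∩ A).card ≤ W.card := Finset.card_le_card (Finset.inter_subset_left)
      _ = k := hWk
    have hcardWA : (W \ A).card = k - (W ∩ A).card := by
      have := Finset.card_inter_add_card_sdiff W A
      omega
    have hcardAW : (A \ W).card = a - (A ∩ W).card := by
      have := Finset.card_inter_add_card_sdiff A W
      omega
    have hxa : (A ∩ W).card ≤ a := Finset.card_le_card (Finset.inter_subset_left)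
    have hcomm : (A ∩ W).card = (W ∩ A).card := by rw [Finset.inter_comm]
    have h41 : ∑ c ∈ W \ A, s c ≤ (W \ A).card * σ := by
      have := Finset.sum_le_card_nsmul (W \ A) s σ ?_
      · simpa using this
      · intro c hc
        rw [Finset.mem_sdiff] at hc
        have hcC : c ∈ C := hWC hc.1
        have : ¬ (σ < s c) := by
          intro h
          exact hc.2 (by rw [hAdef, Finset.mem_filter]; exact ⟨hcC, h⟩)
        omega
    have h42 : (A \ W).card * (σ + 1) ≤ ∑ c ∈ A \ W, s c := by
      have := Finset.card_nsmul_le_sum (A \ W) s (σ + 1) ?_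
      · simpa using this
      · intro c hc
        rw [Finset.mem_sdiff] at hc
        have := hc.1
        rw [hAdef, Finset.mem_filter] at this
        omega
    have hsumA : ∑ c ∈ A, s c = ∑ c ∈ A ∩ W, s c + ∑ c ∈ A \ W, s c := by
      have hW : A ∩ W ∪ A \ W = A := by
        ext c; simp only [Finset.mem_union, Finset.mem_inter, Finset.mem_sdiff]; tauto
      have hd : Disjoint (A ∩ W) (A \ W) := by
        rw [Finset.disjoint_left]; intro c hc hc'
        simp only [Finset.mem_inter, Finset.mem_sdiff] at hc hc'; tauto
      rw [← Finset.sum_union hd, hW]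
    have hsumAW : ∑ c ∈ A ∩ W, s c = ∑ c ∈ W ∩ A, s c := by rw [Finset.inter_comm]
    rw [hsplit W, hM, hsumA, hsumAW]
    -- remains: arithmetic
    have harith : ∑ c ∈ W \ A, s c + (A \ W).card ≤ ∑ c ∈ A \ W, s c + (k - a) * σ := by
      calc ∑ c ∈ W \ A, s c + (A \ W).card
          ≤ (W \ A).card * σ + (A \ W).card := by omega
        _ = ((k - a) + (A \ W).card) * σ + (A \ W).card := by
            congr 2
            omega
        _ = (k - a) * σ + (A \ W).card * (σ + 1) := by ring
        _ ≤ (k - a) * σ + ∑ c ∈ A \ W, s c := by omega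
        _ = ∑ c ∈ A \ W, s c + (k - a) * σ := by ring
    omega
  -- construct the optimal committee with maximal overlap with S
  obtain ⟨P₁, hP₁sub, hP₁card⟩ :=
    Finset.exists_subset_card_eq (s := E ∩ S) (n := min (k - a) ((E ∩ S).card)) (min_le_right _ _)
  have hESle : (E ∩ S).card ≤ E.card := Finset.card_le_card (Finset.inter_subset_left)
  have hP₂le : (k - a) - min (k - a) ((E ∩ S).card) ≤ (E \ S).card := by
    have := Finset.card_inter_add_card_sdiff E S
    omega
  obtain ⟨P₂, hP₂sub, hP₂card⟩ :=
    Finset.exists_subset_card_eq (s := E \ S) (n := (k - a) - min (k - a) ((E ∩ S).card)) hP₂le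
  set W₀ := A ∪ (P₁ ∪ P₂) with hW₀
  have hP₁E : P₁ ⊆ E := hP₁sub.trans (Finset.inter_subset_left)
  have hP₂E : P₂ ⊆ E := hP₂sub.trans (Finset.sdiff_subset)
  have hdP : Disjoint P₁ P₂ := by
    rw [Finset.disjoint_left]
    intro c hc hc'
    have h1' := hP₁sub hc
    have h2' := hP₂sub hc'
    rw [Finset.mem_inter] at h1'
    rw [Finset.mem_sdiff] at h2'
    exact h2'.2 h1'.2
  have hdAP : Disjoint A (P₁ ∪ P₂) := by
    apply Finset.disjoint_union_right.mpr
    exact ⟨hdisj.mono_right hP₁E, hdisj.mono_right hP₂E⟩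
  have hW₀C : W₀ ⊆ C := by
    rw [hW₀]
    apply Finset.union_subset hAC
    exact Finset.union_subset (hP₁E.trans hEC) (hP₂E.trans hEC)
  have hW₀card : W₀.card = k := by
    rw [hW₀, Finset.card_union_of_disjoint hdAP, Finset.card_union_of_disjoint hdP,
      hP₁card, hP₂card]
    omega
  have hW₀score : ∑ c ∈ W₀, s c = M := by
    rw [hW₀, Finset.sum_union hdAP, Finset.sum_union hdP, hM]
    have e1 : ∑ c ∈ P₁, s c = P₁.card * σ := by
      rw [Finset.sum_congr rfl (fun c hc => ?_), Finset.sum_const, smul_eq_mul]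
      have := hP₁E hc
      rw [hEdef, Finset.mem_filter] at this
      exact this.2
    have e2 : ∑ c ∈ P₂, s c = P₂.card * σ := by
      rw [Finset.sum_congr rfl (fun c hc => ?_), Finset.sum_const, smul_eq_mul]
      have := hP₂E hc
      rw [hEdef, Finset.mem_filter] at this
      exact this.2
    rw [e1, e2, hP₁card, hP₂card]
    have : min (k - a) ((E ∩ S).card) + ((k - a) - min (k - a) ((E ∩ S).card)) = k - a := by
      omega
    rw [← add_mul, this]
  have hW₀opt : ∀ W' : Finset α, W' ⊆ C → W'.card = k → avScore N v W' ≤ avScore N v W₀ := by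
    intro W' hW'C hW'k
    rw [havs, havs, hW₀score]
    have := key W' hW'C hW'k
    omega
  have hW₀S : (W₀ ∩ S).card = (A ∩ S).card + min (k - a) ((E ∩ S).card) := by
    have : W₀ ∩ S = (A ∩ S) ∪ P₁ := by
      rw [hW₀, Finset.union_inter_distrib_right, Finset.union_inter_distrib_right]
      congr 1
      have hP₁S : P₁ ∩ S = P₁ := by
        apply Finset.inter_eq_left.mpr
        exact hP₁sub.trans (Finset.inter_subset_right)
      have hP₂S : P₂ ∩ S = ∅ := by
        apply Finset.eq_empty_of_forall_notMem
        intro c hc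
        rw [Finset.mem_inter] at hc
        have := hP₂sub hc.1
        rw [Finset.mem_sdiff] at this
        exact this.2 hc.2
      rw [hP₁S, hP₂S, Finset.union_empty]
    rw [this, Finset.card_union_of_disjoint, hP₁card]
    rw [Finset.disjoint_left]
    intro c hc hc'
    rw [Finset.mem_inter] at hc
    exact (Finset.disjoint_left.mp (hdisj.mono_right hP₁E)) hc.1 hc'
  constructor
  · exact ⟨W₀, hW₀C, hW₀card, hW₀opt, hW₀S⟩
  · rintro n ⟨W, hWC, hWk, hopt, rfl⟩
    -- W is optimal, hence its score is M
    have hWM : ∑ c ∈ W, s c = M := by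
      have h1' := key W hWC hWk
      have h2' := hopt W₀ hW₀C hW₀card
      rw [havs, havs, hW₀score] at h2'
      omega
    have hAW : A ⊆ W := by
      have h1' := key W hWC hWk
      rw [hWM] at h1'
      have : (A \ W).card = 0 := by omega
      rw [Finset.card_eq_zero, Finset.sdiff_eq_empty_iff_subset] at this
      exact this
    have hWinterA : W ∩ A = A := Finset.inter_eq_right.mpr hAW
    have hBcard : (W \ A).card = k - a := by
      have := Finset.card_inter_add_card_sdiff W A
      rw [hWinterA] at this
      omega
    have hBsum : ∑ c ∈ W \ A, s c = (k - a) * σ := by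
      have := hsplit W
      rw [hWM, hWinterA, hM] at this
      omega
    -- every element of W \ A has score exactly σ, so W \ A ⊆ E
    have hBE : W \ A ⊆ E := by
      intro c hc
      have hcC : c ∈ C := hWC (Finset.mem_sdiff.mp hc).1
      have hcle : s c ≤ σ := by
        have h' := (Finset.mem_sdiff.mp hc).2
        have : ¬ (σ < s c) := by
          intro h
          exact h' (by rw [hAdef, Finset.mem_filter]; exact ⟨hcC, h⟩)
        omega
      have hrest : ∑ x ∈ (W \ A).erase c, s x ≤ ((W \ A).card - 1) * σ := by
        have := Finset.sum_le_card_nsmul ((W \ A).erase c) s σ ?_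
        · rw [Finset.card_erase_of_mem hc] at this
          simpa using this
        · intro x hx
          have hx' := Finset.mem_of_mem_erase hx
          rw [Finset.mem_sdiff] at hx'
          have hxC : x ∈ C := hWC hx'.1
          have : ¬ (σ < s x) := by
            intro h
            exact hx'.2 (by rw [hAdef, Finset.mem_filter]; exact ⟨hxC, h⟩)
          omega
      have hsum : s c + ∑ x ∈ (W \ A).erase c, s x = (k - a) * σ := by
        rw [Finset.add_sum_erase _ _ hc, hBsum]
      have hpos : 1 ≤ (W \ A).card := Finset.card_pos.mpr ⟨c, hc⟩
      have hmul : ((W \ A).card - 1) * σ + σ = (W \ A).card * σ := by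
        have h' : (W \ A).card - 1 + 1 = (W \ A).card := by omega
        calc ((W \ A).card - 1) * σ + σ = ((W \ A).card - 1 + 1) * σ := by ring
          _ = (W \ A).card * σ := by rw [h']
      have hceq : s c = σ := by
        rw [hBcard] at hrest hmul
        omega
      rw [hEdef, Finset.mem_filter]
      exact ⟨hcC, hceq⟩
    -- conclude
    have hWsplit : W ∩ S = (A ∩ S) ∪ ((W \ A) ∩ S) := by
      ext c
      simp only [Finset.mem_inter, Finset.mem_union, Finset.mem_sdiff]
      constructor
      · rintro ⟨hcW, hcS⟩
        by_cases hcA : c ∈ A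
        · exact Or.inl ⟨hcA, hcS⟩
        · exact Or.inr ⟨⟨hcW, hcA⟩, hcS⟩
      · rintro (⟨hcA, hcS⟩ | ⟨⟨hcW, _⟩, hcS⟩)
        · exact ⟨hAW hcA, hcS⟩
        · exact ⟨hcW, hcS⟩
    rw [hWsplit]
    have hle1 : ((W \ A) ∩ S).card ≤ k - a := by
      calc ((W \ A) ∩ S).card ≤ (W \ A).card :=
        Finset.card_le_card (Finset.inter_subset_left)
      _ = k - a := hBcard
    have hle2 : ((W \ A) ∩ S).card ≤ (E ∩ S).card := by
      apply Finset.card_le_card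
      exact Finset.inter_subset_inter hBE (le_refl S)
    have := Finset.card_union_le (A ∩ S) ((W \ A) ∩ S)
    omega
end

section
/- Let λ : ℕ⁺ → [0,1] be nonincreasing with λ(1) = 1 and λ(2) < 1. Then there exists a positive integer s with 1 ≤ s ≤ 2·⌈1/(1−λ(2))⌉ − 1 such that λ(s) − λ(s+1) > λ(s+1) − λ(s+2) and λ(s) − λ(s+1) > λ(s+2) − λ(s+3). -/
/-!
Write `ε = λ(1) - λ(2)`. If no index up to `2n - 1` is a peak of the differences, then from a
drop `λ(m) - λ(m+1) ≥ ε` one of the next two drops is at least as large, and it starts at a value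
at most `λ(m+1) ≤ λ(m) - ε`. Starting from `m = 1` and repeating `n` times forces `λ` below
`λ(1) - nε ≤ 0`, contradicting nonnegativity.
-/

def IsDropPeak (f : ℕ → ℝ) (s : ℕ) : Prop :=
  f (s + 1) - f (s + 2) < f s - f (s + 1) ∧ f (s + 2) - f (s + 3) < f s - f (s + 1)

lemma exists_next_drop_ge_of_not_isDropPeak {f : ℕ → ℝ} {m : ℕ}
    (hanti : f (m + 2) ≤ f (m + 1)) (hpeak : ¬ IsDropPeak f m) :
    ∃ m', m < m' ∧ m' ≤ m + 2 ∧ f m - f (m + 1) ≤ f m' - f (m' + 1) ∧ f m' ≤ f (m + 1) := by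
  by_cases hnext : f m - f (m + 1) ≤ f (m + 1) - f (m + 2)
  · exact ⟨m + 1, by omega, by omega, hnext, le_rfl⟩
  · have hnext2 : f m - f (m + 1) ≤ f (m + 2) - f (m + 3) := by
      by_contra h
      exact hpeak ⟨not_le.mp hnext, not_le.mp h⟩
    exact ⟨m + 2, by omega, le_rfl, hnext2, hanti⟩

lemma exists_large_drop_of_forall_not_isDropPeak {f : ℕ → ℝ} {n : ℕ}
    (hanti : ∀ i, 1 ≤ i → f (i + 1) ≤ f i)
    (hno : ∀ s, 1 ≤ s → s ≤ 2 * n - 1 → ¬ IsDropPeak f s) :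
    ∀ j ≤ n, ∃ m, 1 ≤ m ∧ m ≤ 2 * j + 1 ∧
      f 1 - f 2 ≤ f m - f (m + 1) ∧ f m ≤ f 1 - j * (f 1 - f 2) := by
  intro j
  induction j with
  | zero => exact fun _ ↦ ⟨1, le_rfl, le_rfl, le_rfl, by simp⟩
  | succ j ih =>
    intro hj
    obtain ⟨m, hm1, hmj, hdrop, hval⟩ := ih (by omega)
    obtain ⟨m', hmm', hm'm, hdrop', hval'⟩ :=
      exists_next_drop_ge_of_not_isDropPeak (hanti (m + 1) (by omega)) (hno m hm1 (by omega))
    refine ⟨m', by omega, by omega, hdrop.trans hdrop', ?_⟩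
    push_cast
    linarith

theorem exists_isDropPeak {f : ℕ → ℝ} {n : ℕ}
    (hanti : ∀ i, 1 ≤ i → f (i + 1) ≤ f i) (hnonneg : ∀ i, 1 ≤ i → 0 ≤ f i)
    (hstep : f 2 < f 1) (hn : f 1 ≤ n * (f 1 - f 2)) :
    ∃ s, 1 ≤ s ∧ s ≤ 2 * n - 1 ∧ IsDropPeak f s := by
  by_contra! hno
  obtain ⟨m, hm1, -, hdrop, hval⟩ :=
    exists_large_drop_of_forall_not_isDropPeak hanti (fun s hs1 hs ↦ hno s hs1 hs) n le_rfl
  have := hnonneg (m + 1) (by omega)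
  linarith

/-- Every unit-decreasing OWA function λ has an index s with
1 ≤ s ≤ 2·⌈1/(1−λ(2))⌉ − 1 at which the difference λ(s) − λ(s+1) strictly exceeds both
λ(s+1) − λ(s+2) and λ(s+2) − λ(s+3). -/
theorem stmt7 (lam : ℕ → ℝ) (hlam1 : lam 1 = 1)
    (hlam01 : ∀ i : ℕ, 1 ≤ i → lam i ∈ Set.Icc (0 : ℝ) 1)
    (hmono : ∀ i j : ℕ, 1 ≤ i → i ≤ j → lam j ≤ lam i)
    (hud : lam 2 < 1) :
    ∃ s : ℕ, 1 ≤ s ∧ s ≤ 2 * ⌈(1 : ℝ) / (1 - lam 2)⌉₊ - 1 ∧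
      lam (s + 1) - lam (s + 2) < lam s - lam (s + 1) ∧
      lam (s + 2) - lam (s + 3) < lam s - lam (s + 1) := by
  have hε : 0 < 1 - lam 2 := by linarith
  have hceil : 1 ≤ ⌈(1 : ℝ) / (1 - lam 2)⌉₊ * (1 - lam 2) :=
    (div_le_iff₀ hε).mp (Nat.le_ceil _)
  exact exists_isDropPeak (fun i hi ↦ hmono i (i + 1) hi (by omega))
    (fun i hi ↦ (hlam01 i hi).1) (by rwa [hlam1]) (by rwa [hlam1])
end
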